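/- Let M = (R^4, g) with g(∂x,∂xbar) = g(∂y,∂y) = g(∂z,∂z) = 1, g(∂x,∂z) = 2φ(y), where φ''(y) ≠ 0 at some point p. Then M is not Jacobi--Videv at p: rho J(∂x,∂y)∂y = -(1/2)(φ'')^2 ∂xbar ≠ 0 while J(∂x,∂y) rho ∂y = 0, so rho does not commute with the polarized Jacobi operator J(∂x,∂y). -/

import Mathlib

noncomputable section

open Finset in
/-- Partial derivative in the `i`-th coordinate direction. -/
def pd {ι : Type*} [Fintype ι] [DecidableEq ι]
    (i : ι) (f : (ι → ℝ) → ℝ) (p : ι → ℝ) : ℝ :=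
  fderiv ℝ f p (Pi.single i 1)

/-- Christoffel symbols of the second kind `Γ^k_{ij}` of the metric `g`
(with inverse metric `ginv`). -/
def christoffel {ι : Type*} [Fintype ι] [DecidableEq ι]
    (g ginv : (ι → ℝ) → Matrix ι ι ℝ) (k i j : ι) (p : ι → ℝ) : ℝ :=
  (1 / 2) * ∑ l, ginv p k l *
    (pd i (fun q => g q j l) p + pd j (fun q => g q i l) p - pd l (fun q => g q i j) p)

/-- Components of the curvature operator of the Levi-Civita connection:
`R(∂_i,∂_j)∂_k = ∑_l (curvOp g ginv i j k l) ∂_l`. -/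
def curvOp {ι : Type*} [Fintype ι] [DecidableEq ι]
    (g ginv : (ι → ℝ) → Matrix ι ι ℝ) (i j k l : ι) (p : ι → ℝ) : ℝ :=
  pd i (christoffel g ginv l j k) p - pd j (christoffel g ginv l i k) p
    + ∑ m, christoffel g ginv l i m p * christoffel g ginv m j k p
    - ∑ m, christoffel g ginv l j m p * christoffel g ginv m i k p

/-- The curvature operator extended multilinearly to tangent vectors:
component `l` of `R(v,w)u`. -/
def curvVec {ι : Type*} [Fintype ι] [DecidableEq ι]
    (g ginv : (ι → ℝ) → Matrix ι ι ℝ) (p : ι → ℝ) (v w u : ι → ℝ) : ι → ℝ :=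
  fun l => ∑ i, ∑ j, ∑ k, v i * w j * u k * curvOp g ginv i j k l p

/-- The polarized Jacobi operator `J(v,w)u = (1/2){R(u,v)w + R(u,w)v}`. -/
def jacobiVec {ι : Type*} [Fintype ι] [DecidableEq ι]
    (g ginv : (ι → ℝ) → Matrix ι ι ℝ) (p : ι → ℝ) (v w u : ι → ℝ) : ι → ℝ :=
  fun l => (1 / 2) * (curvVec g ginv p u v w l + curvVec g ginv p u w v l)

/-- The Ricci tensor `Ric_{ij} = Tr (z ↦ R(z,∂_i)∂_j)`. -/
def ricci {ι : Type*} [Fintype ι] [DecidableEq ι]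
    (g ginv : (ι → ℝ) → Matrix ι ι ℝ) (i j : ι) (p : ι → ℝ) : ℝ :=
  ∑ m, curvOp g ginv m i j m p

/-- The Ricci operator (Ricci tensor with one index raised by `g`), as a matrix:
`rho(∂_j) = ∑_i (ricciOp p) i j ∂_i`. -/
def ricciOp {ι : Type*} [Fintype ι] [DecidableEq ι]
    (g ginv : (ι → ℝ) → Matrix ι ι ℝ) (p : ι → ℝ) : Matrix ι ι ℝ :=
  fun i j => ∑ m, ginv p i m * ricci g ginv m j p

/-- The (0,4) curvature tensor `R_{ijkl} = g(R(∂_i,∂_j)∂_k, ∂_l)`. -/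
def curv4 {ι : Type*} [Fintype ι] [DecidableEq ι]
    (g ginv : (ι → ℝ) → Matrix ι ι ℝ) (i j k l : ι) (p : ι → ℝ) : ℝ :=
  ∑ m, curvOp g ginv i j k m p * g p m l

/-- The metric of Theorem 1.3 on `ℝ⁴` with coordinates `(x, y, z, x̄)`:
`g(∂x,∂x̄) = g(∂y,∂y) = g(∂z,∂z) = 1`, `g(∂x,∂z) = 2φ(y)`. -/
def gPhi (φ : ℝ → ℝ) (p : Fin 4 → ℝ) : Matrix (Fin 4) (Fin 4) ℝ :=
  Matrix.of
    ![![0, 0, 2 * φ (p 1), 1],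
      ![0, 1, 0, 0],
      ![2 * φ (p 1), 0, 1, 0],
      ![1, 0, 0, 0]]

def GinvE (φ : ℝ → ℝ) (p : Fin 4 → ℝ) : Matrix (Fin 4) (Fin 4) ℝ :=
  Matrix.of
    ![![0, 0, 0, 1],
      ![0, 1, 0, 0],
      ![0, 0, 1, -(2 * φ (p 1))],
      ![1, 0, -(2 * φ (p 1)), (2 * φ (p 1))^2]]

lemma ginv_eq (φ : ℝ → ℝ) (ginv : (Fin 4 → ℝ) → Matrix (Fin 4) (Fin 4) ℝ)
    (hginv : ∀ p, gPhi φ p * ginv p = 1 ∧ ginv p * gPhi φ p = 1) (p : Fin 4 → ℝ) :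
    ginv p = GinvE φ p := by
  have h1 : gPhi φ p * GinvE φ p = 1 := by
    ext i j
    fin_cases i <;> fin_cases j <;>
      simp [gPhi, GinvE, Matrix.mul_apply, Fin.sum_univ_four, Matrix.one_apply, Matrix.vecHead, Matrix.vecTail] <;> ring
  calc ginv p = ginv p * (gPhi φ p * GinvE φ p) := by rw [h1, mul_one]
    _ = (ginv p * gPhi φ p) * GinvE φ p := by rw [mul_assoc]
    _ = GinvE φ p := by rw [(hginv p).2, one_mul]

lemma pd_const (c : ℝ) {ι : Type*} [Fintype ι] [DecidableEq ι] (i : ι) (p : ι → ℝ) :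
    pd i (fun _ => c) p = 0 := by simp [pd]

lemma pd_comp1 {f : ℝ → ℝ} {p : Fin 4 → ℝ} (hf : DifferentiableAt ℝ f (p 1)) (i : Fin 4) :
    pd i (fun q => f (q 1)) p = if i = 1 then deriv f (p 1) else 0 := by
  have hp : HasFDerivAt (fun q : Fin 4 → ℝ => f (q 1))
      ((deriv f (p 1)) • (ContinuousLinearMap.proj (R := ℝ) (φ := fun _ : Fin 4 => ℝ) 1)) p := by
    have h1 : HasFDerivAt (fun q : Fin 4 → ℝ => q 1)
        (ContinuousLinearMap.proj (R := ℝ) (φ := fun _ : Fin 4 => ℝ) 1) p :=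
      (ContinuousLinearMap.proj (R := ℝ) (φ := fun _ : Fin 4 => ℝ) 1).hasFDerivAt
    have h2 : HasDerivAt f (deriv f (p 1)) (p 1) := hf.hasDerivAt
    have := h2.comp_hasFDerivAt p h1
    simpa [ContinuousLinearMap.smul_comp, Function.comp_def] using this
  rw [pd, hp.fderiv]
  rcases eq_or_ne i 1 with h1 | h1
  · subst h1; simp
  · simp [Pi.single_apply, h1, Ne.symm h1]

variable {φ : ℝ → ℝ}

lemma pd_g (hφ : Differentiable ℝ φ) (j l : Fin 4) (i : Fin 4) (p : Fin 4 → ℝ) :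
    pd i (fun q => gPhi φ q j l) p =
      if i = 1 ∧ ((j = 0 ∧ l = 2) ∨ (j = 2 ∧ l = 0)) then 2 * deriv φ (p 1) else 0 := by
  have hd : DifferentiableAt ℝ (fun y => 2 * φ y) (p 1) := (hφ (p 1)).const_mul 2
  have hdd : deriv (fun y => 2 * φ y) (p 1) = 2 * deriv φ (p 1) := by
    rw [deriv_const_mul 2 (hφ (p 1))]
  fin_cases j <;> fin_cases l <;>
    simp [gPhi, Matrix.vecHead, Matrix.vecTail, pd_const, pd_comp1 hd, hdd,
      pd_comp1 (f := fun y => (1:ℝ)), pd_comp1 (f := fun y => (0:ℝ))] <;>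
    simp [pd_const]

def Gam (φ : ℝ → ℝ) (k i j : Fin 4) : ℝ → ℝ :=
  if k = 2 ∧ (i = 0 ∧ j = 1 ∨ i = 1 ∧ j = 0) then deriv φ
  else if k = 3 ∧ (i = 1 ∧ j = 2 ∨ i = 2 ∧ j = 1) then deriv φ
  else if k = 1 ∧ (i = 0 ∧ j = 2 ∨ i = 2 ∧ j = 0) then fun y => -deriv φ y
  else if k = 3 ∧ (i = 0 ∧ j = 1 ∨ i = 1 ∧ j = 0) then fun y => -(2 * φ y * deriv φ y)
  else fun _ => 0

lemma chris_eq (hφ : Differentiable ℝ φ)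
    (ginv : (Fin 4 → ℝ) → Matrix (Fin 4) (Fin 4) ℝ)
    (hginv : ∀ p, gPhi φ p * ginv p = 1 ∧ ginv p * gPhi φ p = 1)
    (k i j : Fin 4) (q : Fin 4 → ℝ) :
    christoffel (gPhi φ) ginv k i j q = Gam φ k i j (q 1) := by
  rw [christoffel, ginv_eq φ ginv hginv]
  fin_cases k <;> fin_cases i <;> fin_cases j <;>
    simp [Fin.sum_univ_four, pd_g hφ, GinvE, Gam, Matrix.vecHead, Matrix.vecTail] <;> ring

def dGam (φ : ℝ → ℝ) (k i j : Fin 4) : ℝ → ℝ :=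
  if k = 2 ∧ (i = 0 ∧ j = 1 ∨ i = 1 ∧ j = 0) then deriv (deriv φ)
  else if k = 3 ∧ (i = 1 ∧ j = 2 ∨ i = 2 ∧ j = 1) then deriv (deriv φ)
  else if k = 1 ∧ (i = 0 ∧ j = 2 ∨ i = 2 ∧ j = 0) then fun y => -deriv (deriv φ) y
  else if k = 3 ∧ (i = 0 ∧ j = 1 ∨ i = 1 ∧ j = 0) then
    fun y => -(2 * deriv φ y * deriv φ y + 2 * φ y * deriv (deriv φ) y)
  else fun _ => 0

lemma gam_hasDeriv (hφ : ContDiff ℝ (⊤ : ℕ∞) φ) (k i j : Fin 4) (y : ℝ) :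
    HasDerivAt (Gam φ k i j) (dGam φ k i j y) y := by
  have hφd : Differentiable ℝ φ := hφ.differentiable (by simp)
  have hφ2 : ContDiff ℝ ((⊤ : ℕ∞) : WithTop ℕ∞) φ := hφ.of_le (by simp)
  have hd' : Differentiable ℝ (deriv φ) :=
    ((contDiff_infty_iff_deriv.mp hφ2).2).differentiable (by simp)
  have h1 : HasDerivAt φ (deriv φ y) y := (hφd y).hasDerivAt
  have h2 : HasDerivAt (deriv φ) (deriv (deriv φ) y) y := (hd' y).hasDerivAt
  unfold Gam dGam
  split_ifs
  · exact h2
  · exact h2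
  · exact h2.neg
  · exact ((h1.const_mul 2).mul h2).neg
  · exact hasDerivAt_const y 0

lemma pd_chris (hφ : ContDiff ℝ (⊤ : ℕ∞) φ)
    (ginv : (Fin 4 → ℝ) → Matrix (Fin 4) (Fin 4) ℝ)
    (hginv : ∀ p, gPhi φ p * ginv p = 1 ∧ ginv p * gPhi φ p = 1)
    (m k i j : Fin 4) (p : Fin 4 → ℝ) :
    pd m (christoffel (gPhi φ) ginv k i j) p = if m = 1 then dGam φ k i j (p 1) else 0 := by
  have hfun : christoffel (gPhi φ) ginv k i j = fun q => Gam φ k i j (q 1) :=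
    funext (chris_eq (hφ.differentiable (by simp)) ginv hginv k i j)
  rw [hfun, pd_comp1 (gam_hasDeriv hφ k i j (p 1)).differentiableAt m,
    (gam_hasDeriv hφ k i j (p 1)).deriv]


lemma ricci_eq (hφ : ContDiff ℝ (⊤ : ℕ∞) φ)
    (ginv : (Fin 4 → ℝ) → Matrix (Fin 4) (Fin 4) ℝ)
    (hginv : ∀ p, gPhi φ p * ginv p = 1 ∧ ginv p * gPhi φ p = 1)
    (i j : Fin 4) (p : Fin 4 → ℝ) :
    ricci (gPhi φ) ginv i j p =
      if i = 0 ∧ j = 0 then 2 * (deriv φ (p 1))^2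
      else if (i = 0 ∧ j = 2) ∨ (i = 2 ∧ j = 0) then -(deriv (deriv φ) (p 1))
      else 0 := by
  have hφd : Differentiable ℝ φ := hφ.differentiable (by simp)
  fin_cases i <;> fin_cases j <;>
    simp [ricci, curvOp, Fin.sum_univ_four, pd_chris hφ ginv hginv,
      chris_eq hφd ginv hginv, Gam, dGam] <;> ring


lemma jac_eq (hφ : ContDiff ℝ (⊤ : ℕ∞) φ)
    (ginv : (Fin 4 → ℝ) → Matrix (Fin 4) (Fin 4) ℝ)
    (hginv : ∀ p, gPhi φ p * ginv p = 1 ∧ ginv p * gPhi φ p = 1)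
    (p : Fin 4 → ℝ) :
    jacobiVec (gPhi φ) ginv p (Pi.single 0 1) (Pi.single 1 1) (Pi.single 1 1) =
      fun l => if l = 2 then deriv (deriv φ) (p 1) / 2
        else if l = 3 then
          -((deriv φ (p 1))^2 + 2 * φ (p 1) * deriv (deriv φ) (p 1)) / 2
        else 0 := by
  have hφd : Differentiable ℝ φ := hφ.differentiable (by simp)
  funext l
  fin_cases l <;>
    simp [jacobiVec, curvVec, curvOp, Fin.sum_univ_four, Pi.single_apply,
      pd_chris hφ ginv hginv, chris_eq hφd ginv hginv, Gam, dGam] <;> ring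

lemma ricciOp_eq (hφ : ContDiff ℝ (⊤ : ℕ∞) φ)
    (ginv : (Fin 4 → ℝ) → Matrix (Fin 4) (Fin 4) ℝ)
    (hginv : ∀ p, gPhi φ p * ginv p = 1 ∧ ginv p * gPhi φ p = 1)
    (p : Fin 4 → ℝ) :
    ricciOp (gPhi φ) ginv p = Matrix.of
      ![![0, 0, 0, 0],
        ![0, 0, 0, 0],
        ![-(deriv (deriv φ) (p 1)), 0, 0, 0],
        ![2 * (deriv φ (p 1))^2 + 2 * φ (p 1) * deriv (deriv φ) (p 1), 0,
          -(deriv (deriv φ) (p 1)), 0]] := by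
  ext i j
  fin_cases i <;> fin_cases j <;>
    simp [ricciOp, Fin.sum_univ_four, ginv_eq φ ginv hginv, GinvE,
      ricci_eq hφ ginv hginv, Matrix.vecHead, Matrix.vecTail] <;> ring



/-- For the metric `gPhi`, at any point where `φ'' ≠ 0` the Ricci
operator does not commute with the polarized Jacobi operator `J(∂x,∂y)`:
`rho J(∂x,∂y)∂y = -(1/2)(φ'')²∂x̄ ≠ 0` while `J(∂x,∂y) rho ∂y = 0`.  Hence the
manifold is not Jacobi--Videv there. -/
theorem stmt_14 (φ : ℝ → ℝ) (hφ : ContDiff ℝ (⊤ : ℕ∞) φ)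
    (ginv : (Fin 4 → ℝ) → Matrix (Fin 4) (Fin 4) ℝ)
    (hginv : ∀ p, gPhi φ p * ginv p = 1 ∧ ginv p * gPhi φ p = 1)
    (p : Fin 4 → ℝ) (hp : deriv (deriv φ) (p 1) ≠ 0) :
    Matrix.mulVec (ricciOp (gPhi φ) ginv p)
        (jacobiVec (gPhi φ) ginv p (Pi.single 0 1) (Pi.single 1 1) (Pi.single 1 1)) =
      (fun l => if l = 3 then -(1 / 2) * (deriv (deriv φ) (p 1)) ^ 2 else 0) ∧
    Matrix.mulVec (ricciOp (gPhi φ) ginv p)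
        (jacobiVec (gPhi φ) ginv p (Pi.single 0 1) (Pi.single 1 1) (Pi.single 1 1)) ≠ 0 ∧
    jacobiVec (gPhi φ) ginv p (Pi.single 0 1) (Pi.single 1 1)
        (Matrix.mulVec (ricciOp (gPhi φ) ginv p) (Pi.single 1 1)) = 0 := by
  have hJ := jac_eq hφ ginv hginv p
  have hR := ricciOp_eq hφ ginv hginv p
  have h1 : Matrix.mulVec (ricciOp (gPhi φ) ginv p)
      (jacobiVec (gPhi φ) ginv p (Pi.single 0 1) (Pi.single 1 1) (Pi.single 1 1)) =
      (fun l => if l = 3 then -(1 / 2) * (deriv (deriv φ) (p 1)) ^ 2 else 0) := by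
    rw [hR, hJ]; funext l
    fin_cases l <;>
      simp [Matrix.mulVec, dotProduct, Fin.sum_univ_four,
        Matrix.vecHead, Matrix.vecTail] <;> ring
  refine ⟨h1, ?_, ?_⟩
  · rw [h1]
    intro h
    have h3 := congrFun h 3
    simp at h3
    exact hp h3
  · have h0 : Matrix.mulVec (ricciOp (gPhi φ) ginv p) (Pi.single 1 1) = 0 := by
      rw [hR]; funext i
      fin_cases i <;>
        simp [Matrix.mulVec, dotProduct, Fin.sum_univ_four, Pi.single_apply,
          Matrix.vecHead, Matrix.vecTail]
    rw [h0]
    funext l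
    simp [jacobiVec, curvVec]
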